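/- Let K be a symmetric positive definite N×N matrix and [Z Q] an N×N orthogonal matrix partitioned into blocks Z (N×k) and Q (N×(N-k)). Then (Z^T K Z)⁻¹ = Z^T K⁻¹ Z - Z^T K⁻¹ Q (Q^T K⁻¹ Q)⁻¹ Q^T K⁻¹ Z. -/

import Mathlib

/-!
With `A = Zᵀ K Z`, the completeness relation `Z Zᵀ = 1 - Q Qᵀ` gives
`A Zᵀ K⁻¹ = Zᵀ - Zᵀ K Q Qᵀ K⁻¹`. Multiplying on the right by `Z` and by `Q` yields
`A Zᵀ K⁻¹ Z = 1 - Zᵀ K Q Qᵀ K⁻¹ Z` and `A Zᵀ K⁻¹ Q = -Zᵀ K Q (Qᵀ K⁻¹ Q)`, so the Schur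
complement `Zᵀ K⁻¹ Z - Zᵀ K⁻¹ Q (Qᵀ K⁻¹ Q)⁻¹ Qᵀ K⁻¹ Z` is a right inverse of `A`.
Invertibility of `Qᵀ K⁻¹ Q` comes from positive definiteness of `K⁻¹` and injectivity of `Q`.
-/

open Matrix

namespace Matrix

section Schur

variable {R n m p : Type*} [CommRing R] [Fintype n] [DecidableEq n] [Fintype m] [Fintype p]
  {K : Matrix n n R} {Z : Matrix n m R} {Q : Matrix n p R}

lemma transpose_mul_mul_mul_transpose_mul_inv (hK : IsUnit K.det)
    (hsum : Z * Zᵀ + Q * Qᵀ = 1) :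
    Zᵀ * K * Z * Zᵀ * K⁻¹ = Zᵀ - Zᵀ * K * Q * Qᵀ * K⁻¹ := by
  calc Zᵀ * K * Z * Zᵀ * K⁻¹ = Zᵀ * K * (1 - Q * Qᵀ) * K⁻¹ := by
        rw [← eq_sub_of_add_eq hsum]; simp only [Matrix.mul_assoc]
    _ = Zᵀ - Zᵀ * K * Q * Qᵀ * K⁻¹ := by
        rw [Matrix.mul_sub, Matrix.sub_mul, Matrix.mul_one, mul_nonsing_inv_cancel_right K _ hK]
        simp only [Matrix.mul_assoc]

variable [DecidableEq m] [DecidableEq p]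

lemma transpose_mul_mul_mul_schur_eq_one (hK : IsUnit K.det)
    (hC : IsUnit (Qᵀ * K⁻¹ * Q).det) (hZ : Zᵀ * Z = 1) (hZQ : Zᵀ * Q = 0)
    (hsum : Z * Zᵀ + Q * Qᵀ = 1) :
    Zᵀ * K * Z * (Zᵀ * K⁻¹ * Z - Zᵀ * K⁻¹ * Q * (Qᵀ * K⁻¹ * Q)⁻¹ * Qᵀ * K⁻¹ * Z) = 1 := by
  set C := Qᵀ * K⁻¹ * Q
  have hA := transpose_mul_mul_mul_transpose_mul_inv hK hsum
  have hAZ : Zᵀ * K * Z * Zᵀ * K⁻¹ * Z = 1 - Zᵀ * K * Q * (Qᵀ * K⁻¹ * Z) := by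
    rw [hA, Matrix.sub_mul, hZ]; simp only [Matrix.mul_assoc]
  have hAQ : Zᵀ * K * Z * Zᵀ * K⁻¹ * Q = -(Zᵀ * K * Q * C) := by
    rw [hA, Matrix.sub_mul, hZQ, zero_sub]; simp only [C, Matrix.mul_assoc]
  calc Zᵀ * K * Z * (Zᵀ * K⁻¹ * Z - Zᵀ * K⁻¹ * Q * C⁻¹ * Qᵀ * K⁻¹ * Z)
      = Zᵀ * K * Z * Zᵀ * K⁻¹ * Z
          - Zᵀ * K * Z * Zᵀ * K⁻¹ * Q * (C⁻¹ * (Qᵀ * K⁻¹ * Z)) := by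
        simp only [Matrix.mul_sub, Matrix.mul_assoc]
    _ = 1 := by
        rw [hAZ, hAQ, Matrix.neg_mul, Matrix.mul_assoc _ C, mul_nonsing_inv_cancel_left C _ hC]
        abel

end Schur

lemma PosDef.transpose_mul_mul_same_of_orthonormal {n m : Type*} [Fintype n] [Fintype m]
    [DecidableEq m] {M : Matrix n n ℝ} (hM : M.PosDef) {Q : Matrix n m ℝ} (hQ : Qᵀ * Q = 1) :
    (Qᵀ * M * Q).PosDef := by
  have hinj : Function.Injective Q.mulVec :=
    Function.LeftInverse.injective (g := Qᵀ.mulVec) fun x => by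
      rw [mulVec_mulVec, hQ, one_mulVec]
  simpa only [conjTranspose_eq_transpose_of_trivial] using hM.conjTranspose_mul_mul_same hinj

end Matrix

/-- Inverse of a projected SPD matrix expressed through the Schur complement of the
inverse of the full matrix in the orthogonal basis `[Z Q]`. -/
theorem inv_projected_schur {N k l : ℕ} (K : Matrix (Fin N) (Fin N) ℝ)
    (hK : K.PosDef)
    (Z : Matrix (Fin N) (Fin k) ℝ) (Q : Matrix (Fin N) (Fin l) ℝ)
    (hZ : Zᵀ * Z = 1) (hQ : Qᵀ * Q = 1) (hZQ : Zᵀ * Q = 0)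
    (hsum : Z * Zᵀ + Q * Qᵀ = 1) :
    (Zᵀ * K * Z)⁻¹ =
      Zᵀ * K⁻¹ * Z - Zᵀ * K⁻¹ * Q * (Qᵀ * K⁻¹ * Q)⁻¹ * Qᵀ * K⁻¹ * Z := by
  have hC : (Qᵀ * K⁻¹ * Q).PosDef := hK.inv.transpose_mul_mul_same_of_orthonormal hQ
  exact inv_eq_right_inv <| transpose_mul_mul_mul_schur_eq_one hK.det_pos.ne'.isUnit
    hC.det_pos.ne'.isUnit hZ hZQ hsum
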